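/- arXiv:2504.04164 — 2 statements merged into one kernel-verified Lean document; each statement's English description precedes it below -/
import Mathlib

section
/- (Proposition 1 of the paper.) Let S and O be finite nonempty types, p a strictly positive joint probability mass function on S × O, and q a variational conditional family on O given S. Then the expected variational log-likelihood plus the entropy of O is a lower bound on the mutual information: Σ_{s,o} p(s,o)·log(q s o) + h(O) ≤ I(S;O). -/
/-- Proposition 1: the expected variational log-likelihood plus the entropy of O
is a lower bound on the mutual information. -/
theorem variational_loglik_plus_entropy_le_mutual_information
    {S O : Type*} [Fintype S] [Fintype O] [Nonempty S] [Nonempty O]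
    (p : S × O → ℝ)
    (hp_pos : ∀ s o, 0 < p (s, o))
    (hp_sum : ∑ s : S, ∑ o : O, p (s, o) = 1)
    (q : S → O → ℝ)
    (hq_pos : ∀ s o, 0 < q s o)
    (hq_sum : ∀ s, ∑ o : O, q s o = 1) :
    (∑ s : S, ∑ o : O, p (s, o) * Real.log (q s o)) +
      (- ∑ o : O, (∑ s : S, p (s, o)) * Real.log (∑ s : S, p (s, o))) ≤
    ∑ s : S, ∑ o : O, p (s, o) *
        Real.log (p (s, o) / ((∑ o' : O, p (s, o')) * (∑ s' : S, p (s', o)))) := by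
  classical
  set pS : S → ℝ := fun s => ∑ o : O, p (s, o) with hpS
  set pO : O → ℝ := fun o => ∑ s : S, p (s, o) with hpO
  have hpS_pos : ∀ s, 0 < pS s := fun s =>
    Finset.sum_pos (fun o _ => hp_pos s o) Finset.univ_nonempty
  have hpO_pos : ∀ o, 0 < pO o := fun o =>
    Finset.sum_pos (fun s _ => hp_pos s o) Finset.univ_nonempty
  -- Gibbs inequality term
  have key : ∀ s : S, 0 ≤ ∑ o : O, p (s, o) *
      (Real.log (p (s, o)) - Real.log (pS s) - Real.log (q s o)) := by
    intro s
    have h1 : ∀ o : O, -(p (s, o) *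
        (Real.log (p (s, o)) - Real.log (pS s) - Real.log (q s o))) ≤
        pS s * q s o - p (s, o) := by
      intro o
      have hx : 0 < pS s * q s o / p (s, o) := by
        have := hp_pos s o; have := hq_pos s o; have := hpS_pos s; positivity
      have hlog := Real.log_le_sub_one_of_pos hx
      have h2 : p (s, o) * Real.log (pS s * q s o / p (s, o)) ≤
          p (s, o) * (pS s * q s o / p (s, o) - 1) :=
        mul_le_mul_of_nonneg_left hlog (le_of_lt (hp_pos s o))
      have h3 : p (s, o) * (pS s * q s o / p (s, o) - 1) = pS s * q s o - p (s, o) := by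
        have hp := (hp_pos s o).ne'
        field_simp
      have h4 : Real.log (pS s * q s o / p (s, o)) =
          Real.log (pS s) + Real.log (q s o) - Real.log (p (s, o)) := by
        rw [Real.log_div (mul_pos (hpS_pos s) (hq_pos s o)).ne' (ne_of_gt (hp_pos s o)),
          Real.log_mul (ne_of_gt (hpS_pos s)) (ne_of_gt (hq_pos s o))]
      rw [h4, h3] at h2
      linarith
    have hsum : ∑ o : O, -(p (s, o) * (Real.log (p (s, o)) - Real.log (pS s) - Real.log (q s o)))
        ≤ ∑ o : O, (pS s * q s o - p (s, o)) :=
      Finset.sum_le_sum fun o _ => h1 o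
    have hzero : ∑ o : O, (pS s * q s o - p (s, o)) = 0 := by
      rw [Finset.sum_sub_distrib, ← Finset.mul_sum, hq_sum s]
      show pS s * 1 - pS s = 0
      ring
    rw [hzero, Finset.sum_neg_distrib] at hsum
    linarith
  -- expand the RHS
  have expand : ∀ s : S, ∀ o : O,
      p (s, o) * Real.log (p (s, o) / (pS s * pO o)) =
      p (s, o) * (Real.log (p (s, o)) - Real.log (pS s) - Real.log (q s o))
        + p (s, o) * Real.log (q s o) + p (s, o) * (-Real.log (pO o)) := by
    intro s o
    rw [Real.log_div (ne_of_gt (hp_pos s o)) (mul_pos (hpS_pos s) (hpO_pos o)).ne',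
      Real.log_mul (ne_of_gt (hpS_pos s)) (ne_of_gt (hpO_pos o))]
    ring
  have hRHS : ∑ s : S, ∑ o : O, p (s, o) * Real.log (p (s, o) / (pS s * pO o)) =
      (∑ s : S, ∑ o : O, p (s, o) *
        (Real.log (p (s, o)) - Real.log (pS s) - Real.log (q s o)))
      + (∑ s : S, ∑ o : O, p (s, o) * Real.log (q s o))
      + (∑ s : S, ∑ o : O, p (s, o) * (-Real.log (pO o))) := by
    rw [← Finset.sum_add_distrib, ← Finset.sum_add_distrib]
    apply Finset.sum_congr rfl
    intro s _
    rw [← Finset.sum_add_distrib, ← Finset.sum_add_distrib]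
    exact Finset.sum_congr rfl fun o _ => expand s o
  have hEnt : ∑ s : S, ∑ o : O, p (s, o) * (-Real.log (pO o)) =
      - ∑ o : O, pO o * Real.log (pO o) := by
    rw [Finset.sum_comm, ← Finset.sum_neg_distrib]
    apply Finset.sum_congr rfl
    intro o _
    rw [← Finset.sum_mul]
    ring
  have hkey : 0 ≤ ∑ s : S, ∑ o : O, p (s, o) *
      (Real.log (p (s, o)) - Real.log (pS s) - Real.log (q s o)) :=
    Finset.sum_nonneg fun s _ => key s
  calc (∑ s : S, ∑ o : O, p (s, o) * Real.log (q s o)) +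
      (- ∑ o : O, pO o * Real.log (pO o))
      ≤ (∑ s : S, ∑ o : O, p (s, o) *
          (Real.log (p (s, o)) - Real.log (pS s) - Real.log (q s o)))
        + (∑ s : S, ∑ o : O, p (s, o) * Real.log (q s o))
        + (∑ s : S, ∑ o : O, p (s, o) * (-Real.log (pO o))) := by
        rw [hEnt]; linarith
    _ = ∑ s : S, ∑ o : O, p (s, o) * Real.log (p (s, o) / (pS s * pO o)) := hRHS.symm
end

section
/- Let S and O be finite nonempty types, p a strictly positive joint probability mass function on S × O, and q a variational conditional family on O given S. Then Σ_{s,o} p(s,o)·log(q s o / p_O(o)) ≤ I(S;O), i.e. the expected variational log-density-ratio is a lower bound on the mutual information. -/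
/-- The expected variational log-density-ratio is a lower bound on the
mutual information. -/
theorem variational_ratio_le_mutual_information
    {S O : Type*} [Fintype S] [Fintype O] [Nonempty S] [Nonempty O]
    (p : S × O → ℝ)
    (hp_pos : ∀ s o, 0 < p (s, o))
    (hp_sum : ∑ s : S, ∑ o : O, p (s, o) = 1)
    (q : S → O → ℝ)
    (hq_pos : ∀ s o, 0 < q s o)
    (hq_sum : ∀ s, ∑ o : O, q s o = 1) :
    ∑ s : S, ∑ o : O, p (s, o) * Real.log (q s o / (∑ s' : S, p (s', o))) ≤
    ∑ s : S, ∑ o : O, p (s, o) *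
        Real.log (p (s, o) / ((∑ o' : O, p (s, o')) * (∑ s' : S, p (s', o)))) := by
  have hpS : ∀ s : S, 0 < ∑ o' : O, p (s, o') := fun s =>
    Finset.sum_pos (fun o _ => hp_pos s o) Finset.univ_nonempty
  have hpO : ∀ o : O, 0 < ∑ s' : S, p (s', o) := fun o =>
    Finset.sum_pos (fun s _ => hp_pos s o) Finset.univ_nonempty
  have key : ∑ s : S, ∑ o : O,
      p (s, o) * Real.log ((∑ o' : O, p (s, o')) * q s o / p (s, o)) ≤ 0 := by
    have h1 : ∀ s o, p (s, o) * Real.log ((∑ o' : O, p (s, o')) * q s o / p (s, o)) ≤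
        (∑ o' : O, p (s, o')) * q s o - p (s, o) := by
      intro s o
      have hx : 0 < (∑ o' : O, p (s, o')) * q s o / p (s, o) :=
        div_pos (mul_pos (hpS s) (hq_pos s o)) (hp_pos s o)
      calc p (s, o) * Real.log ((∑ o' : O, p (s, o')) * q s o / p (s, o))
          ≤ p (s, o) * ((∑ o' : O, p (s, o')) * q s o / p (s, o) - 1) :=
            mul_le_mul_of_nonneg_left (Real.log_le_sub_one_of_pos hx) (hp_pos s o).le
        _ = (∑ o' : O, p (s, o')) * q s o - p (s, o) := by
            rw [mul_sub, mul_one, mul_div_cancel₀ _ (hp_pos s o).ne']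
    calc ∑ s : S, ∑ o : O, p (s, o) * Real.log ((∑ o' : O, p (s, o')) * q s o / p (s, o))
        ≤ ∑ s : S, ∑ o : O, ((∑ o' : O, p (s, o')) * q s o - p (s, o)) :=
          Finset.sum_le_sum fun s _ => Finset.sum_le_sum fun o _ => h1 s o
      _ = 0 := by
          simp only [Finset.sum_sub_distrib, ← Finset.mul_sum, hq_sum, mul_one]
          rw [hp_sum]
          simp [Finset.sum_sub_distrib]
  have main : ∑ s : S, ∑ o : O, p (s, o) * Real.log (q s o / (∑ s' : S, p (s', o)))
      = (∑ s : S, ∑ o : O, p (s, o) * Real.log ((∑ o' : O, p (s, o')) * q s o / p (s, o)))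
        + ∑ s : S, ∑ o : O, p (s, o) *
            Real.log (p (s, o) / ((∑ o' : O, p (s, o')) * (∑ s' : S, p (s', o)))) := by
    rw [← Finset.sum_add_distrib]
    refine Finset.sum_congr rfl fun s _ => ?_
    rw [← Finset.sum_add_distrib]
    refine Finset.sum_congr rfl fun o _ => ?_
    rw [← mul_add]
    congr 1
    rw [Real.log_div (hq_pos s o).ne' (hpO o).ne',
        Real.log_div (mul_pos (hpS s) (hq_pos s o)).ne' (hp_pos s o).ne',
        Real.log_div (hp_pos s o).ne' (mul_pos (hpS s) (hpO o)).ne',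
        Real.log_mul (hpS s).ne' (hq_pos s o).ne',
        Real.log_mul (hpS s).ne' (hpO o).ne']
    ring
  rw [main]
  linarith [key]
end
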